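/- Fix p ∈ (0,1), η > 0, ν ∈ ℝ, τ > 0, and set δ = pη/32. Then the system g₁(A,ζ) = g₂(A,ζ) = 0 has exactly one solution with A > 0, namely A = 1/√(2p) and ζ = p(32ν + 3η)/32; i.e., the two nontrivial equilibria coalesce in a saddle-node bifurcation at δ = pη/32. -/
import Mathlib


/-- Slow-flow amplitude dynamics for a general network with a single nonlinear node
(small linear damping). -/
noncomputable def g₁ (p ν η A ζ : ℝ) : ℝ :=
  (1 / 2) * ((p * ν - ζ) * A + (p ^ 2 * η / 4) * A ^ 3 - (p ^ 3 * η / 8) * A ^ 5)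

/-- Proposed autonomous damping dynamics for a general network. -/
noncomputable def g₂ (p ν η δ τ A ζ : ℝ) : ℝ :=
  τ⁻¹ * (-ζ + δ + p * ν + (p ^ 2 * η / 8) * A ^ 2)

set_option maxHeartbeats 1000000 in
/-- At `δ = pη/32` the coupled dynamics has exactly one nontrivial equilibrium,
namely `A = 1/√(2p)` and `ζ = p(32ν + 3η)/32`: the saddle-node bifurcation. -/
theorem stmt_11 (p η ν τ : ℝ) (hp : p ∈ Set.Ioo (0 : ℝ) 1) (hη : 0 < η) (hτ : 0 < τ) :
    ∀ A ζ : ℝ,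
      (0 < A ∧ g₁ p ν η A ζ = 0 ∧ g₂ p ν η (p * η / 32) τ A ζ = 0) ↔
        (A = 1 / Real.sqrt (2 * p) ∧ ζ = p * (32 * ν + 3 * η) / 32) := by
  obtain ⟨hp0, hp1⟩ := hp
  have h2p : 0 < 2 * p := by linarith
  have hs : Real.sqrt (2 * p) > 0 := Real.sqrt_pos.mpr h2p
  have hs2 : Real.sqrt (2 * p) ^ 2 = 2 * p := Real.sq_sqrt h2p.le
  intro A ζ
  constructor
  · rintro ⟨hA, h1, h2⟩
    simp only [g₁, g₂] at h1 h2
    have hτ' : τ⁻¹ ≠ 0 := by positivity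
    have h2' : -ζ + p * η / 32 + p * ν + p ^ 2 * η / 8 * A ^ 2 = 0 := by
      rcases mul_eq_zero.mp h2 with h | h
      · exact absurd h hτ'
      · exact h
    have hζ : ζ = p * η / 32 + p * ν + p ^ 2 * η / 8 * A ^ 2 := by linarith
    have key : p * η * (2 * p * A ^ 2 - 1) ^ 2 = 0 := by
      have h1' : (p * ν - ζ) * A + p ^ 2 * η / 4 * A ^ 3 - p ^ 3 * η / 8 * A ^ 5 = 0 := by
        linarith
      have hA' : A ≠ 0 := hA.ne'
      have : A * (p * η * (2 * p * A ^ 2 - 1) ^ 2) = 0 := by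
        rw [hζ] at h1'; nlinarith [h1']
      rcases mul_eq_zero.mp this with h | h
      · exact absurd h hA'
      · exact h
    have hpη : p * η ≠ 0 := by positivity
    have hA2 : 2 * p * A ^ 2 = 1 := by
      have := (mul_eq_zero.mp key).resolve_left hpη
      have := pow_eq_zero_iff (n := 2) (by norm_num) |>.mp this
      linarith
    have hAeq : A = 1 / Real.sqrt (2 * p) := by
      have : (A * Real.sqrt (2 * p)) ^ 2 = 1 := by
        rw [mul_pow, hs2]; linarith
      have h1 : A * Real.sqrt (2 * p) = 1 := by
        have hpos : 0 < A * Real.sqrt (2 * p) := mul_pos hA hs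
        have hfac : (A * Real.sqrt (2 * p) - 1) * (A * Real.sqrt (2 * p) + 1) = 0 := by
          nlinarith [this]
        rcases mul_eq_zero.mp hfac with h | h
        · linarith
        · linarith
      rw [eq_div_iff hs.ne']
      linarith
    refine ⟨hAeq, ?_⟩
    have hA2' : A ^ 2 = 1 / (2 * p) := by
      field_simp
      linarith
    rw [hζ, hA2']
    field_simp
    ring
  · rintro ⟨hAeq, hζeq⟩
    have hA2 : A ^ 2 = 1 / (2 * p) := by
      rw [hAeq, div_pow, one_pow, hs2]
    constructor
    · rw [hAeq]; positivity
    constructor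
    · unfold g₁
      rw [hζeq]
      have : A ^ 3 = A * A ^ 2 := by ring
      have h5 : A ^ 5 = A * A ^ 2 * A ^ 2 := by ring
      rw [this, h5, hA2]
      field_simp
      ring
    · unfold g₂
      rw [hζeq, hA2, mul_eq_zero]
      right
      have hp' : p ≠ 0 := hp0.ne'
      clear hAeq hs hs2
      field_simp
      ring
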